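/- arXiv:2007.06799 — 5 statements merged into one kernel-verified Lean document; each statement's English description precedes it below -/
import Mathlib

section
/- Fix reals ρ > 0, a > 0, δ₁ ≥ 0 and δ₂ with 1/2 + δ₁ < δ₂ < 1, W₁ > 0, W̄₃ ≥ 0 and C_ξ ≥ 0, and define the step sizes α_k = a/(k+1)^{δ₂} for k ∈ ℕ. Suppose (F_k)_{k∈ℕ} is a sequence of nonnegative reals and (ξ_k)_{k∈ℕ} a sequence of reals satisfying F_{k+1} ≤ exp(−ρ α_k) F_k + ξ_k and 0 ≤ ξ_k ≤ C_ξ/(k+1)^{2δ₂−2δ₁} + W̄₃ exp(−W₁ k^{1−δ₁}) for every k ∈ ℕ. Then there exist nonnegative constants C₁, C₂, C₃ depending only on ρ, a, δ₁, δ₂, W₁, W̄₃, C_ξ (and not on k or on the sequence (F_k)) such that for every k ∈ ℕ: F_{k+1} ≤ (F₀ + C₁) exp(−ρ Σ_{ℓ=0}^{k} α_ℓ) + C₂/(k+1)^{δ₂−2δ₁} + C₃ exp(−(ρ a/(1−δ₂)) (k+1)^{1−δ₂}). -/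
set_option maxHeartbeats 1000000

open Finset

lemma my_geom_sum_le {r : ℝ} (h0 : 0 ≤ r) (h1 : r < 1) (n : ℕ) :
    ∑ i ∈ Finset.range n, r ^ i ≤ 1 / (1 - r) := by
  have hne : r ≠ 1 := ne_of_lt h1
  have h2 : (0:ℝ) < 1 - r := by linarith
  have heq : ∑ i ∈ Finset.range n, r ^ i = (1 - r ^ n) / (1 - r) := by
    rw [geom_sum_eq hne, div_eq_div_iff (sub_ne_zero.2 hne) (ne_of_gt h2)]; ring
  rw [heq]
  gcongr
  have := pow_nonneg h0 n
  linarith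

lemma exp_neg_le_rpow {m x : ℝ} (hm : 0 < m) (hx : 0 < x) :
    Real.exp (-x) ≤ m ^ m * Real.exp (-m) / x ^ m := by
  have h1 : x / m ≤ Real.exp (x / m - 1) := by
    have := Real.add_one_le_exp (x / m - 1); linarith
  have h2 : (x / m) ^ m ≤ Real.exp (x - m) := by
    calc (x / m) ^ m ≤ (Real.exp (x / m - 1)) ^ m :=
          Real.rpow_le_rpow (by positivity) h1 hm.le
      _ = Real.exp ((x / m - 1) * m) := by
          rw [← Real.exp_one_rpow (x / m - 1), ← Real.rpow_mul (Real.exp_pos 1).le,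
            Real.exp_one_rpow]
      _ = Real.exp (x - m) := by rw [sub_mul, div_mul_cancel₀ _ (ne_of_gt hm), one_mul]
  have hxm : x ^ m = (x / m) ^ m * m ^ m := by
    rw [← Real.mul_rpow (by positivity) hm.le, div_mul_cancel₀ _ (ne_of_gt hm)]
  have hxpow : 0 < x ^ m := Real.rpow_pos_of_pos hx m
  rw [le_div_iff₀ hxpow]
  calc Real.exp (-x) * x ^ m = (x / m) ^ m * m ^ m * Real.exp (-x) := by rw [← hxm]; ring
    _ ≤ Real.exp (x - m) * m ^ m * Real.exp (-x) := by
        have hmm : (0:ℝ) ≤ m ^ m := (Real.rpow_pos_of_pos hm m).le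
        have hex : (0:ℝ) ≤ Real.exp (-x) := (Real.exp_pos _).le
        exact mul_le_mul_of_nonneg_right (mul_le_mul_of_nonneg_right h2 hmm) hex
    _ = m ^ m * (Real.exp (x - m) * Real.exp (-x)) := by ring
    _ = m ^ m * Real.exp (-m) := by rw [← Real.exp_add]; congr 1; ring

/-- exponential decay dominated by any polynomial decay -/
lemma exp_decay_poly {c s : ℝ} (q : ℝ) (hc : 0 < c) (hs : 0 < s) (hq : 0 ≤ q) :
    ∃ C : ℝ, 0 ≤ C ∧ ∀ t : ℝ, 0 < t → Real.exp (-(c * t ^ s)) ≤ C / t ^ q := by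
  rcases eq_or_lt_of_le hq with hq0 | hq
  · refine ⟨1, zero_le_one, fun t ht => ?_⟩
    rw [← hq0, Real.rpow_zero, div_one]
    exact Real.exp_le_one_iff.2 (neg_nonpos.2 (by positivity))
  · set m := q / s with hm
    have hmpos : 0 < m := div_pos hq hs
    refine ⟨m ^ m * Real.exp (-m) / c ^ m, by positivity, fun t ht => ?_⟩
    have hx : 0 < c * t ^ s := by positivity
    have := exp_neg_le_rpow hmpos hx
    have hrw : (c * t ^ s) ^ m = c ^ m * t ^ q := by
      rw [Real.mul_rpow hc.le (Real.rpow_nonneg ht.le s), ← Real.rpow_mul ht.le]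
      rw [hm, mul_div_cancel₀ _ (ne_of_gt hs)]
    rw [hrw] at this
    calc Real.exp (-(c * t ^ s)) ≤ m ^ m * Real.exp (-m) / (c ^ m * t ^ q) := this
      _ = m ^ m * Real.exp (-m) / c ^ m / t ^ q := by rw [div_div]

lemma unroll (ρ : ℝ) (α F ξ : ℕ → ℝ)
    (hrec : ∀ k, F (k + 1) ≤ Real.exp (-ρ * α k) * F k + ξ k) :
    ∀ k, F (k + 1) ≤ Real.exp (-ρ * ∑ ℓ ∈ Finset.range (k + 1), α ℓ) * F 0 +
      ∑ j ∈ Finset.range (k + 1),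
        Real.exp (-ρ * ∑ ℓ ∈ Finset.Ico (j + 1) (k + 1), α ℓ) * ξ j := by
  intro k
  induction k with
  | zero => simpa [Finset.sum_range_one] using hrec 0
  | succ k ih =>
    have hek : (0:ℝ) ≤ Real.exp (-ρ * α (k + 1)) := (Real.exp_pos _).le
    calc F (k + 2) ≤ Real.exp (-ρ * α (k + 1)) * F (k + 1) + ξ (k + 1) := hrec (k + 1)
      _ ≤ Real.exp (-ρ * α (k + 1)) *
            (Real.exp (-ρ * ∑ ℓ ∈ Finset.range (k + 1), α ℓ) * F 0 +
             ∑ j ∈ Finset.range (k + 1),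
               Real.exp (-ρ * ∑ ℓ ∈ Finset.Ico (j + 1) (k + 1), α ℓ) * ξ j) + ξ (k + 1) :=
          add_le_add_left (mul_le_mul_of_nonneg_left ih hek) _
      _ = _ := by
          rw [Finset.sum_range_succ
              (fun j => Real.exp (-ρ * ∑ ℓ ∈ Finset.Ico (j + 1) (k + 1 + 1), α ℓ) * ξ j) (k + 1),
            Finset.sum_range_succ α (k + 1), Finset.Ico_self, Finset.sum_empty, mul_zero,
            Real.exp_zero, one_mul,
            show -ρ * (∑ ℓ ∈ Finset.range (k + 1), α ℓ + α (k + 1)) =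
              (-ρ * α (k + 1)) + (-ρ * ∑ ℓ ∈ Finset.range (k + 1), α ℓ) from by ring,
            Real.exp_add, mul_add, ← mul_assoc]
          have hsum : Real.exp (-ρ * α (k + 1)) *
              ∑ j ∈ Finset.range (k + 1),
                Real.exp (-ρ * ∑ ℓ ∈ Finset.Ico (j + 1) (k + 1), α ℓ) * ξ j
              = ∑ j ∈ Finset.range (k + 1),
                Real.exp (-ρ * ∑ ℓ ∈ Finset.Ico (j + 1) (k + 1 + 1), α ℓ) * ξ j := by
            rw [Finset.mul_sum]
            refine Finset.sum_congr rfl fun j hj => ?_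
            rw [Finset.sum_Ico_succ_top
                (Nat.succ_le_succ (Nat.le_of_lt_succ (Finset.mem_range.1 hj))),
              ← mul_assoc, ← Real.exp_add]
            congr 2; ring
          rw [hsum, add_assoc]


/-- Deterministic core of Theorem 2: existence of constants `C₁, C₂, C₃`
(depending only on the fixed parameters, not on `k` or the sequences) such
that the recursion `F_{k+1} ≤ e^{-ρ α_k} F_k + ξ_k` yields the stated bound. -/
theorem stmt1 (ρ a δ₁ δ₂ W₁ W₃ Cξ : ℝ)
    (hρ : 0 < ρ) (ha : 0 < a) (hδ₁ : 0 ≤ δ₁)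
    (hδ₂l : 1 / 2 + δ₁ < δ₂) (hδ₂u : δ₂ < 1)
    (hW₁ : 0 < W₁) (hW₃ : 0 ≤ W₃) (hCξ : 0 ≤ Cξ) :
    ∃ C₁ C₂ C₃ : ℝ, 0 ≤ C₁ ∧ 0 ≤ C₂ ∧ 0 ≤ C₃ ∧
      ∀ F ξ : ℕ → ℝ,
        (∀ k, 0 ≤ F k) →
        (∀ k : ℕ, F (k + 1) ≤
          Real.exp (-ρ * (a / ((k : ℝ) + 1) ^ δ₂)) * F k + ξ k) →
        (∀ k : ℕ, 0 ≤ ξ k) →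
        (∀ k : ℕ, ξ k ≤ Cξ / ((k : ℝ) + 1) ^ (2 * δ₂ - 2 * δ₁) +
          W₃ * Real.exp (-W₁ * (k : ℝ) ^ (1 - δ₁))) →
        ∀ k : ℕ,
          F (k + 1) ≤
            (F 0 + C₁) *
              Real.exp (-ρ * ∑ ℓ ∈ Finset.range (k + 1), a / ((ℓ : ℝ) + 1) ^ δ₂) +
            C₂ / ((k : ℝ) + 1) ^ (δ₂ - 2 * δ₁) +
            C₃ * Real.exp (-(ρ * a / (1 - δ₂)) * ((k : ℝ) + 1) ^ (1 - δ₂)) := by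
  have hδ₁half : δ₁ < 1 / 2 := by linarith
  have hδ₂pos : 0 < δ₂ := by linarith
  have h1δ₂ : 0 < 1 - δ₂ := by linarith
  have h1δ₁ : 0 < 1 - δ₁ := by linarith
  have hp : 0 < δ₂ - 2 * δ₁ := by linarith
  have hβ : 0 < 2 * δ₂ - 2 * δ₁ := by linarith
  obtain ⟨CA, hCA0, hCA⟩ := exp_decay_poly (1 + (δ₂ - 2 * δ₁))
    (show (0:ℝ) < ρ * a / 4 by positivity) h1δ₂ (by linarith)
  obtain ⟨CB, hCB0, hCB⟩ := exp_decay_poly (2 * δ₂ - 2 * δ₁) hW₁ h1δ₁ (by linarith)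
  have h2β : (0:ℝ) < 2 ^ (2 * δ₂ - 2 * δ₁) := Real.rpow_pos_of_pos two_pos _
  set CB' := max 1 (2 ^ (2 * δ₂ - 2 * δ₁) * CB) with hCB'def
  have hCB'1 : (1:ℝ) ≤ CB' := le_max_left _ _
  have hCB'0 : (0:ℝ) ≤ CB' := by linarith
  set D := Cξ + W₃ * CB' with hDdef
  have hD0 : 0 ≤ D := by have := mul_nonneg hW₃ hCB'0; rw [hDdef]; linarith
  have hX0 : (0:ℝ) ≤ CA + 2 ^ (2 * δ₂ - 2 * δ₁) * (1 + 1 / (ρ * a)) := by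
    have : (0:ℝ) ≤ 1 + 1 / (ρ * a) := by positivity
    nlinarith
  set C₂ := D * (CA + 2 ^ (2 * δ₂ - 2 * δ₁) * (1 + 1 / (ρ * a))) + D with hC₂def
  have hC₂0 : 0 ≤ C₂ := by have := mul_nonneg hD0 hX0; rw [hC₂def]; linarith
  have hDC₂ : D * CA + D * (2 ^ (2 * δ₂ - 2 * δ₁) * (1 + 1 / (ρ * a))) ≤ C₂ := by
    rw [hC₂def]; nlinarith
  refine ⟨0, C₂, 0, le_refl 0, hC₂0, le_refl 0, fun F ξ hF hrec hξ0 hξb => ?_⟩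
  -- pointwise bound on ξ
  have hxi : ∀ j : ℕ, ξ j ≤ D / ((j:ℝ) + 1) ^ (2 * δ₂ - 2 * δ₁) := by
    intro j
    have hWb : Real.exp (-W₁ * (j:ℝ) ^ (1 - δ₁)) ≤ CB' / ((j:ℝ) + 1) ^ (2 * δ₂ - 2 * δ₁) := by
      rcases Nat.eq_zero_or_pos j with hj | hj
      · subst hj
        simp only [Nat.cast_zero]
        rw [Real.zero_rpow (ne_of_gt h1δ₁), mul_zero, Real.exp_zero, zero_add,
          Real.one_rpow, div_one]
        exact hCB'1
      · have hjpos : (0:ℝ) < (j:ℝ) := by exact_mod_cast hj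
        have hj1 : (1:ℝ) ≤ (j:ℝ) := by exact_mod_cast hj
        have h1 := hCB (j:ℝ) hjpos
        have hjβpos : (0:ℝ) < ((j:ℝ)) ^ (2 * δ₂ - 2 * δ₁) := Real.rpow_pos_of_pos hjpos _
        have hj1βpos : (0:ℝ) < ((j:ℝ) + 1) ^ (2 * δ₂ - 2 * δ₁) :=
          Real.rpow_pos_of_pos (by linarith) _
        have h2 : ((j:ℝ) + 1) ^ (2 * δ₂ - 2 * δ₁) ≤
            2 ^ (2 * δ₂ - 2 * δ₁) * (j:ℝ) ^ (2 * δ₂ - 2 * δ₁) := by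
          rw [← Real.mul_rpow (by norm_num) hjpos.le]
          exact Real.rpow_le_rpow (by linarith) (by linarith) hβ.le
        calc Real.exp (-W₁ * (j:ℝ) ^ (1 - δ₁))
            = Real.exp (-(W₁ * (j:ℝ) ^ (1 - δ₁))) := by rw [neg_mul]
          _ ≤ CB / (j:ℝ) ^ (2 * δ₂ - 2 * δ₁) := h1
          _ ≤ 2 ^ (2 * δ₂ - 2 * δ₁) * CB / ((j:ℝ) + 1) ^ (2 * δ₂ - 2 * δ₁) := by
              rw [div_le_div_iff₀ hjβpos hj1βpos]
              nlinarith [mul_le_mul_of_nonneg_left h2 hCB0]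
          _ ≤ CB' / ((j:ℝ) + 1) ^ (2 * δ₂ - 2 * δ₁) := by
              gcongr
              exact le_max_right _ _
    calc ξ j ≤ Cξ / ((j:ℝ) + 1) ^ (2 * δ₂ - 2 * δ₁) +
          W₃ * Real.exp (-W₁ * (j:ℝ) ^ (1 - δ₁)) := hξb j
      _ ≤ Cξ / ((j:ℝ) + 1) ^ (2 * δ₂ - 2 * δ₁) +
          W₃ * (CB' / ((j:ℝ) + 1) ^ (2 * δ₂ - 2 * δ₁)) :=
          add_le_add_right (mul_le_mul_of_nonneg_left hWb hW₃) _
      _ = D / ((j:ℝ) + 1) ^ (2 * δ₂ - 2 * δ₁) := by rw [hDdef, add_div, ← mul_div_assoc]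
  intro k
  set g : ℝ := (k:ℝ) + 1 with hg
  have hg0 : (0:ℝ) < g := by rw [hg]; positivity
  have hg1 : (1:ℝ) ≤ g := by rw [hg]; simp [Nat.cast_nonneg]
  have hgδ₂pos : (0:ℝ) < g ^ δ₂ := Real.rpow_pos_of_pos hg0 _
  have hgppos : (0:ℝ) < g ^ (δ₂ - 2 * δ₁) := Real.rpow_pos_of_pos hg0 _
  set r := Real.exp (-(ρ * (a / g ^ δ₂))) with hr
  have hr0 : (0:ℝ) ≤ r := (Real.exp_pos _).le
  have hr1 : r < 1 := by
    rw [hr]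
    apply Real.exp_lt_one_iff.2
    have : 0 < ρ * (a / g ^ δ₂) := by positivity
    linarith
  -- per-term bound
  have hterm : ∀ j ∈ Finset.range (k + 1),
      Real.exp (-ρ * ∑ ℓ ∈ Finset.Ico (j + 1) (k + 1), a / ((ℓ:ℝ) + 1) ^ δ₂) * ξ j
        ≤ r ^ (k - j) * (D / ((j:ℝ) + 1) ^ (2 * δ₂ - 2 * δ₁)) := by
    intro j hj
    have hjk : j ≤ k := Nat.lt_succ_iff.1 (Finset.mem_range.1 hj)
    have hsum_ge : ((k - j : ℕ) : ℝ) * (a / g ^ δ₂) ≤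
        ∑ ℓ ∈ Finset.Ico (j + 1) (k + 1), a / ((ℓ:ℝ) + 1) ^ δ₂ := by
      have hcard : (Finset.Ico (j + 1) (k + 1)).card = k - j := by
        rw [Nat.card_Ico]; omega
      have hle : ∀ ℓ ∈ Finset.Ico (j + 1) (k + 1), a / g ^ δ₂ ≤ a / ((ℓ:ℝ) + 1) ^ δ₂ := by
        intro ℓ hℓ
        have hℓk : ℓ ≤ k := by
          have := (Finset.mem_Ico.1 hℓ).2; omega
        have hc : ((ℓ:ℝ) + 1) ≤ g := by
          rw [hg]; have : (ℓ:ℝ) ≤ (k:ℝ) := by exact_mod_cast hℓk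
          linarith
        have hpos : (0:ℝ) < ((ℓ:ℝ) + 1) ^ δ₂ := Real.rpow_pos_of_pos (by positivity) _
        have : ((ℓ:ℝ) + 1) ^ δ₂ ≤ g ^ δ₂ :=
          Real.rpow_le_rpow (by positivity) hc hδ₂pos.le
        gcongr
      have := Finset.card_nsmul_le_sum (Finset.Ico (j + 1) (k + 1))
        (fun ℓ => a / ((ℓ:ℝ) + 1) ^ δ₂) (a / g ^ δ₂) hle
      rwa [hcard, nsmul_eq_mul] at this
    have h1 : Real.exp (-ρ * ∑ ℓ ∈ Finset.Ico (j + 1) (k + 1), a / ((ℓ:ℝ) + 1) ^ δ₂)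
        ≤ r ^ (k - j) := by
      rw [hr, ← Real.exp_nat_mul]
      apply Real.exp_le_exp.2
      have h2 : ((k - j : ℕ) : ℝ) * (-(ρ * (a / g ^ δ₂)))
          = -(ρ * (((k - j : ℕ) : ℝ) * (a / g ^ δ₂))) := by ring
      have h3 := mul_le_mul_of_nonneg_left hsum_ge hρ.le
      rw [h2]; nlinarith
    exact mul_le_mul h1 (hxi j) (hξ0 j) (pow_nonneg hr0 _)
  have hT : (∑ j ∈ Finset.range (k + 1),
        Real.exp (-ρ * ∑ ℓ ∈ Finset.Ico (j + 1) (k + 1), a / ((ℓ:ℝ) + 1) ^ δ₂) * ξ j)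
      ≤ ∑ j ∈ Finset.range (k + 1), r ^ (k - j) * (D / ((j:ℝ) + 1) ^ (2 * δ₂ - 2 * δ₁)) :=
    Finset.sum_le_sum hterm
  -- main sum bound
  have hmain : (∑ j ∈ Finset.range (k + 1),
      r ^ (k - j) * (D / ((j:ℝ) + 1) ^ (2 * δ₂ - 2 * δ₁))) ≤ C₂ / g ^ (δ₂ - 2 * δ₁) := by
    rcases Nat.eq_zero_or_pos k with hk0 | hkpos
    · subst hk0
      rw [Finset.sum_range_one]
      simp only [Nat.cast_zero, Nat.sub_zero, pow_zero, one_mul, zero_add, Real.one_rpow,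
        div_one]
      have : g = 1 := by rw [hg]; norm_num
      rw [this, Real.one_rpow, div_one, hC₂def]
      nlinarith [mul_nonneg hD0 hX0]
    · have hk1 : (1:ℝ) ≤ (k:ℝ) := by exact_mod_cast hkpos
      set h := k / 2 with hh
      have hhk : h ≤ k := Nat.div_le_self k 2
      have hsplit : ∑ j ∈ Finset.range (k + 1),
          r ^ (k - j) * (D / ((j:ℝ) + 1) ^ (2 * δ₂ - 2 * δ₁))
          = (∑ j ∈ Finset.Ico 0 (h + 1), r ^ (k - j) * (D / ((j:ℝ) + 1) ^ (2 * δ₂ - 2 * δ₁)))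
          + ∑ j ∈ Finset.Ico (h + 1) (k + 1),
              r ^ (k - j) * (D / ((j:ℝ) + 1) ^ (2 * δ₂ - 2 * δ₁)) := by
        rw [Finset.range_eq_Ico,
          ← Finset.sum_Ico_consecutive _ (Nat.zero_le (h + 1)) (by omega : h + 1 ≤ k + 1)]
      -- head bound
      have hhead : (∑ j ∈ Finset.Ico 0 (h + 1),
          r ^ (k - j) * (D / ((j:ℝ) + 1) ^ (2 * δ₂ - 2 * δ₁)))
          ≤ ((h:ℝ) + 1) * (r ^ (k - h) * D) := by
        calc (∑ j ∈ Finset.Ico 0 (h + 1),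
            r ^ (k - j) * (D / ((j:ℝ) + 1) ^ (2 * δ₂ - 2 * δ₁)))
            ≤ ∑ _j ∈ Finset.Ico 0 (h + 1), r ^ (k - h) * D := by
              apply Finset.sum_le_sum
              intro j hj
              have hjh : j ≤ h := by
                have := (Finset.mem_Ico.1 hj).2; omega
              have hpow : r ^ (k - j) ≤ r ^ (k - h) :=
                pow_le_pow_of_le_one hr0 hr1.le (Nat.sub_le_sub_left hjh k)
              have hdd : D / ((j:ℝ) + 1) ^ (2 * δ₂ - 2 * δ₁) ≤ D :=
                div_le_self hD0 (Real.one_le_rpow (by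
                  have := Nat.cast_nonneg (α := ℝ) j; linarith) hβ.le)
              exact mul_le_mul hpow hdd
                (div_nonneg hD0 (Real.rpow_pos_of_pos (by positivity) _).le)
                (pow_nonneg hr0 _)
          _ = ((h:ℝ) + 1) * (r ^ (k - h) * D) := by
              rw [Finset.sum_const, Nat.card_Ico, nsmul_eq_mul]
              norm_num
      have hkh4 : g / 4 ≤ ((k - h : ℕ) : ℝ) := by
        have h1 : ((h:ℕ):ℝ) ≤ (k:ℝ) / 2 := by
          rw [hh]; exact_mod_cast Nat.cast_div_le
        have h2 : ((k - h : ℕ) : ℝ) = (k:ℝ) - (h:ℝ) := by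
          rw [Nat.cast_sub hhk]
        rw [h2, hg]; linarith
      have hrkh : r ^ (k - h) ≤ CA / g ^ (1 + (δ₂ - 2 * δ₁)) := by
        have hstep : r ^ (k - h) ≤ Real.exp (-(ρ * a / 4 * g ^ (1 - δ₂))) := by
          rw [hr, ← Real.exp_nat_mul]
          apply Real.exp_le_exp.2
          have hgd : g ^ (1 - δ₂) = g / g ^ δ₂ := by
            rw [Real.rpow_sub hg0, Real.rpow_one]
          have hx : (0:ℝ) < ρ * (a / g ^ δ₂) := by positivity
          have h4 : ρ * a / 4 * (g / g ^ δ₂) = g / 4 * (ρ * (a / g ^ δ₂)) := by ring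
          have h5 : g / 4 * (ρ * (a / g ^ δ₂)) ≤ ((k - h : ℕ) : ℝ) * (ρ * (a / g ^ δ₂)) :=
            mul_le_mul_of_nonneg_right hkh4 hx.le
          rw [hgd]
          nlinarith
        exact hstep.trans (hCA g hg0)
      have hheadf : ((h:ℝ) + 1) * (r ^ (k - h) * D)
          ≤ D * CA / g ^ (δ₂ - 2 * δ₁) := by
        have hhg : ((h:ℝ) + 1) ≤ g := by
          rw [hg]; have : (h:ℝ) ≤ (k:ℝ) := by exact_mod_cast hhk
          linarith
        have hCApos : (0:ℝ) < g ^ (1 + (δ₂ - 2 * δ₁)) := Real.rpow_pos_of_pos hg0 _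
        calc ((h:ℝ) + 1) * (r ^ (k - h) * D)
            ≤ g * (CA / g ^ (1 + (δ₂ - 2 * δ₁)) * D) := by
              apply mul_le_mul hhg (mul_le_mul_of_nonneg_right hrkh hD0)
                (mul_nonneg (pow_nonneg hr0 _) hD0) hg0.le
          _ = D * CA / g ^ (δ₂ - 2 * δ₁) := by
              rw [Real.rpow_add hg0, Real.rpow_one]
              field_simp
      -- tail bound
      have htail : (∑ j ∈ Finset.Ico (h + 1) (k + 1),
          r ^ (k - j) * (D / ((j:ℝ) + 1) ^ (2 * δ₂ - 2 * δ₁)))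
          ≤ (D * 2 ^ (2 * δ₂ - 2 * δ₁) / g ^ (2 * δ₂ - 2 * δ₁)) * (1 / (1 - r)) := by
        have hgβpos : (0:ℝ) < g ^ (2 * δ₂ - 2 * δ₁) := Real.rpow_pos_of_pos hg0 _
        have hcoef : (0:ℝ) ≤ D * 2 ^ (2 * δ₂ - 2 * δ₁) / g ^ (2 * δ₂ - 2 * δ₁) := by positivity
        calc (∑ j ∈ Finset.Ico (h + 1) (k + 1),
            r ^ (k - j) * (D / ((j:ℝ) + 1) ^ (2 * δ₂ - 2 * δ₁)))
            ≤ ∑ j ∈ Finset.Ico (h + 1) (k + 1),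
                (D * 2 ^ (2 * δ₂ - 2 * δ₁) / g ^ (2 * δ₂ - 2 * δ₁)) * r ^ (k - j) := by
              apply Finset.sum_le_sum
              intro j hj
              obtain ⟨hj1, hj2⟩ := Finset.mem_Ico.1 hj
              have hkj : g ≤ 2 * ((j:ℝ) + 1) := by
                have hn : k + 1 ≤ 2 * (j + 1) := by omega
                rw [hg]
                exact_mod_cast hn
              have hjβpos : (0:ℝ) < ((j:ℝ) + 1) ^ (2 * δ₂ - 2 * δ₁) :=
                Real.rpow_pos_of_pos (by positivity) _
              have hgβ : g ^ (2 * δ₂ - 2 * δ₁) ≤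
                  2 ^ (2 * δ₂ - 2 * δ₁) * ((j:ℝ) + 1) ^ (2 * δ₂ - 2 * δ₁) := by
                rw [← Real.mul_rpow (by norm_num) (by positivity)]
                exact Real.rpow_le_rpow hg0.le hkj hβ.le
              have hD' : D / ((j:ℝ) + 1) ^ (2 * δ₂ - 2 * δ₁)
                  ≤ D * 2 ^ (2 * δ₂ - 2 * δ₁) / g ^ (2 * δ₂ - 2 * δ₁) := by
                rw [div_le_div_iff₀ hjβpos hgβpos]
                nlinarith [mul_le_mul_of_nonneg_left hgβ hD0]
              calc r ^ (k - j) * (D / ((j:ℝ) + 1) ^ (2 * δ₂ - 2 * δ₁))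
                  ≤ r ^ (k - j) * (D * 2 ^ (2 * δ₂ - 2 * δ₁) / g ^ (2 * δ₂ - 2 * δ₁)) :=
                    mul_le_mul_of_nonneg_left hD' (pow_nonneg hr0 _)
                _ = (D * 2 ^ (2 * δ₂ - 2 * δ₁) / g ^ (2 * δ₂ - 2 * δ₁)) * r ^ (k - j) :=
                    mul_comm _ _
          _ = (D * 2 ^ (2 * δ₂ - 2 * δ₁) / g ^ (2 * δ₂ - 2 * δ₁)) *
                ∑ j ∈ Finset.Ico (h + 1) (k + 1), r ^ (k - j) := by
              rw [Finset.mul_sum]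
          _ ≤ (D * 2 ^ (2 * δ₂ - 2 * δ₁) / g ^ (2 * δ₂ - 2 * δ₁)) * (1 / (1 - r)) := by
              apply mul_le_mul_of_nonneg_left _ hcoef
              calc ∑ j ∈ Finset.Ico (h + 1) (k + 1), r ^ (k - j)
                  ≤ ∑ j ∈ Finset.range (k + 1), r ^ (k - j) := by
                    apply Finset.sum_le_sum_of_subset_of_nonneg
                    · rw [Finset.range_eq_Ico]
                      exact Finset.Ico_subset_Ico (Nat.zero_le _) le_rfl
                    · intro i _ _; exact pow_nonneg hr0 _
                _ = ∑ i ∈ Finset.range (k + 1), r ^ i := by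
                    have := Finset.sum_range_reflect (fun i => r ^ i) (k + 1)
                    simpa using this
                _ ≤ 1 / (1 - r) := my_geom_sum_le hr0 hr1 _
      have hinv : 1 / (1 - r) ≤ g ^ δ₂ / (ρ * a) + 1 := by
        set x := ρ * (a / g ^ δ₂) with hxd
        have hxpos : 0 < x := by rw [hxd]; positivity
        have hrle : r ≤ 1 / (1 + x) := by
          have h1 : 1 + x ≤ Real.exp x := by
            have := Real.add_one_le_exp x; linarith
          rw [hr, Real.exp_neg, one_div]
          exact inv_anti₀ (by linarith) h1
        have heq : (1:ℝ) - 1 / (1 + x) = x / (1 + x) := by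
          field_simp
          ring
        have h1r : x / (1 + x) ≤ 1 - r := by linarith
        have hxx : 0 < x / (1 + x) := by positivity
        calc 1 / (1 - r) ≤ 1 / (x / (1 + x)) := one_div_le_one_div_of_le hxx h1r
          _ = (1 + x) / x := one_div_div _ _
          _ = 1 / x + 1 := by field_simp
          _ = g ^ δ₂ / (ρ * a) + 1 := by
              rw [hxd, show ρ * (a / g ^ δ₂) = (ρ * a) / g ^ δ₂ from by ring, one_div_div]
      have htailf : (D * 2 ^ (2 * δ₂ - 2 * δ₁) / g ^ (2 * δ₂ - 2 * δ₁)) * (1 / (1 - r))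
          ≤ D * (2 ^ (2 * δ₂ - 2 * δ₁) * (1 + 1 / (ρ * a))) / g ^ (δ₂ - 2 * δ₁) := by
        have hgβpos : (0:ℝ) < g ^ (2 * δ₂ - 2 * δ₁) := Real.rpow_pos_of_pos hg0 _
        have hcoef : (0:ℝ) ≤ D * 2 ^ (2 * δ₂ - 2 * δ₁) / g ^ (2 * δ₂ - 2 * δ₁) := by positivity
        have hstep1 : (D * 2 ^ (2 * δ₂ - 2 * δ₁) / g ^ (2 * δ₂ - 2 * δ₁)) * (1 / (1 - r))
            ≤ (D * 2 ^ (2 * δ₂ - 2 * δ₁) / g ^ (2 * δ₂ - 2 * δ₁)) * (g ^ δ₂ / (ρ * a) + 1) :=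
          mul_le_mul_of_nonneg_left hinv hcoef
        have hsplitβ : g ^ (2 * δ₂ - 2 * δ₁) = g ^ δ₂ * g ^ (δ₂ - 2 * δ₁) := by
          rw [← Real.rpow_add hg0]; congr 1; ring
        have hmono : g ^ (δ₂ - 2 * δ₁) ≤ g ^ (2 * δ₂ - 2 * δ₁) :=
          Real.rpow_le_rpow_of_exponent_le hg1 (by linarith)
        have he1 : (D * 2 ^ (2 * δ₂ - 2 * δ₁) / g ^ (2 * δ₂ - 2 * δ₁)) * (g ^ δ₂ / (ρ * a) + 1)
            = D * 2 ^ (2 * δ₂ - 2 * δ₁) / (ρ * a) / g ^ (δ₂ - 2 * δ₁)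
              + D * 2 ^ (2 * δ₂ - 2 * δ₁) / g ^ (2 * δ₂ - 2 * δ₁) := by
          rw [hsplitβ]
          field_simp
        have he2 : D * 2 ^ (2 * δ₂ - 2 * δ₁) / g ^ (2 * δ₂ - 2 * δ₁)
            ≤ D * 2 ^ (2 * δ₂ - 2 * δ₁) / g ^ (δ₂ - 2 * δ₁) := by
          apply div_le_div_of_nonneg_left (by positivity) hgppos hmono
        have he3 : D * 2 ^ (2 * δ₂ - 2 * δ₁) / (ρ * a) / g ^ (δ₂ - 2 * δ₁)
              + D * 2 ^ (2 * δ₂ - 2 * δ₁) / g ^ (δ₂ - 2 * δ₁)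
            = D * (2 ^ (2 * δ₂ - 2 * δ₁) * (1 + 1 / (ρ * a))) / g ^ (δ₂ - 2 * δ₁) := by
          field_simp
          ring
        linarith
      -- combine
      have hfinal : D * CA / g ^ (δ₂ - 2 * δ₁)
            + D * (2 ^ (2 * δ₂ - 2 * δ₁) * (1 + 1 / (ρ * a))) / g ^ (δ₂ - 2 * δ₁)
          ≤ C₂ / g ^ (δ₂ - 2 * δ₁) := by
        rw [← add_div]
        exact (div_le_div_iff_of_pos_right hgppos).2 hDC₂
      linarith [hsplit, hhead, hheadf, htail, htailf, hfinal,
        hhead.trans hheadf]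
  -- assemble
  have hun := unroll ρ (fun ℓ => a / ((ℓ:ℝ) + 1) ^ δ₂) F ξ hrec k
  calc F (k + 1) ≤ Real.exp (-ρ * ∑ ℓ ∈ Finset.range (k + 1), a / ((ℓ:ℝ) + 1) ^ δ₂) * F 0 +
        ∑ j ∈ Finset.range (k + 1),
          Real.exp (-ρ * ∑ ℓ ∈ Finset.Ico (j + 1) (k + 1), a / ((ℓ:ℝ) + 1) ^ δ₂) * ξ j := hun
    _ ≤ Real.exp (-ρ * ∑ ℓ ∈ Finset.range (k + 1), a / ((ℓ:ℝ) + 1) ^ δ₂) * F 0 +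
        C₂ / g ^ (δ₂ - 2 * δ₁) := add_le_add_right (hT.trans hmain) _
    _ = (F 0 + 0) * Real.exp (-ρ * ∑ ℓ ∈ Finset.range (k + 1), a / ((ℓ:ℝ) + 1) ^ δ₂) +
        C₂ / g ^ (δ₂ - 2 * δ₁) +
        0 * Real.exp (-(ρ * a / (1 - δ₂)) * g ^ (1 - δ₂)) := by ring
end

section
/- Let m ∈ ℕ, let n > 0, α > 0 and c be reals with 0 < c < 1, and let u, w̃, g̃, ṽ ∈ ℝᵐ be vectors with ‖u‖₂ ≤ (1 − c) ‖w̃‖₂. Define ŵ = u − α n g̃ + √(2α) ṽ. Then ‖ŵ‖₂² ≤ (1 − c) ‖w̃‖₂² + (2α/c) · ( 2‖ṽ‖₂²/(1 − c)^{1/2} + n² α ‖g̃‖₂² ). -/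
set_option maxHeartbeats 800000


/-- Deterministic one-step inequality at the core of the consensus analysis. -/
theorem stmt8 (m : ℕ) (n α c : ℝ) (hn : 0 < n) (hα : 0 < α) (hc0 : 0 < c) (hc1 : c < 1)
    (u w g v : EuclideanSpace ℝ (Fin m))
    (hu : ‖u‖ ≤ (1 - c) * ‖w‖) :
    ‖u - (α * n) • g + Real.sqrt (2 * α) • v‖ ^ 2 ≤
      (1 - c) * ‖w‖ ^ 2 +
        (2 * α / c) * (2 * ‖v‖ ^ 2 / Real.sqrt (1 - c) + n ^ 2 * α * ‖g‖ ^ 2) := by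
  set s := Real.sqrt (1 - c) with hsdef
  set t := Real.sqrt (2 * α) with htdef
  have h1c : (0:ℝ) < 1 - c := by linarith
  have hs2 : s ^ 2 = 1 - c := Real.sq_sqrt h1c.le
  have hs0 : 0 < s := Real.sqrt_pos.2 h1c
  have hsle : s ≤ 1 - c / 2 := by
    have h := Real.sqrt_le_sqrt (show 1 - c ≤ (1 - c/2)^2 by nlinarith)
    rwa [Real.sqrt_sq (by linarith)] at h
  have hs1 : c / 2 ≤ 1 - s := by linarith
  have h1s : (0:ℝ) < 1 - s := by linarith
  have ht0 : 0 ≤ t := Real.sqrt_nonneg _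
  have ht2 : t ^ 2 = 2 * α := Real.sq_sqrt (by linarith)
  have key : ∀ x y : ℝ, 0 ≤ x → 0 ≤ y → (x + y) ^ 2 ≤ x ^ 2 / s + y ^ 2 / (1 - s) := by
    intro x y hx hy
    rw [div_add_div _ _ hs0.ne' h1s.ne', le_div_iff₀ (mul_pos hs0 h1s)]
    nlinarith [sq_nonneg ((1 - s) * x - s * y)]
  have hng : ‖(α * n) • g‖ = α * n * ‖g‖ := by
    rw [norm_smul, Real.norm_eq_abs, abs_of_pos (mul_pos hα hn)]
  have htv : ‖t • v‖ = t * ‖v‖ := by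
    rw [norm_smul, Real.norm_eq_abs, abs_of_nonneg ht0]
  have h2 : ‖u + t • v‖ ≤ ‖u‖ + t * ‖v‖ := by
    rw [← htv]; exact norm_add_le _ _
  have h1 : ‖u - (α * n) • g + t • v‖ ≤ ‖u + t • v‖ + α * n * ‖g‖ := by
    rw [sub_add_eq_add_sub, ← hng]; exact norm_sub_le _ _
  have e1 : ‖u - (α * n) • g + t • v‖ ^ 2 ≤ (‖u + t • v‖ + α * n * ‖g‖) ^ 2 :=
    pow_le_pow_left₀ (norm_nonneg _) h1 2
  have e2 := key ‖u + t • v‖ (α * n * ‖g‖) (norm_nonneg _) (by positivity)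
  have e3 : ‖u + t • v‖ ^ 2 ≤ (‖u‖ + t * ‖v‖) ^ 2 :=
    pow_le_pow_left₀ (norm_nonneg _) h2 2
  have e4 := key ‖u‖ (t * ‖v‖) (norm_nonneg _) (by positivity)
  have e5 : ‖u + t • v‖ ^ 2 / s ≤ ‖u‖ ^ 2 / s / s + (t * ‖v‖) ^ 2 / (1 - s) / s := by
    rw [← add_div]
    gcongr
    exact le_trans e3 e4
  -- the three individual bounds
  have b1 : ‖u‖ ^ 2 / s / s ≤ (1 - c) * ‖w‖ ^ 2 := by
    rw [div_div, ← sq, hs2, div_le_iff₀ h1c]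
    nlinarith [norm_nonneg u, norm_nonneg w]
  have b2 : (t * ‖v‖) ^ 2 / (1 - s) / s ≤ (2 * α / c) * (2 * ‖v‖ ^ 2 / s) := by
    have hrhs : (2 * α / c) * (2 * ‖v‖ ^ 2 / s) = (4 * α * ‖v‖ ^ 2) / (c * s) := by
      field_simp; ring
    rw [div_div, mul_pow, ht2, hrhs,
      div_le_div_iff₀ (mul_pos h1s hs0) (mul_pos hc0 hs0)]
    have hcs : c * s ≤ 2 * ((1 - s) * s) := by
      nlinarith [mul_nonneg hs0.le (show (0:ℝ) ≤ 2 * (1 - s) - c by linarith)]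
    calc 2 * α * ‖v‖ ^ 2 * (c * s) ≤ 2 * α * ‖v‖ ^ 2 * (2 * ((1 - s) * s)) :=
          mul_le_mul_of_nonneg_left hcs (by positivity)
      _ = 4 * α * ‖v‖ ^ 2 * ((1 - s) * s) := by ring
  have b3 : (α * n * ‖g‖) ^ 2 / (1 - s) ≤ (2 * α / c) * (n ^ 2 * α * ‖g‖ ^ 2) := by
    have hrhs : (2 * α / c) * (n ^ 2 * α * ‖g‖ ^ 2) = (2 * α ^ 2 * n ^ 2 * ‖g‖ ^ 2) / c := by
      field_simp
    rw [hrhs, div_le_div_iff₀ h1s hc0]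
    nlinarith [mul_nonneg (mul_nonneg (sq_nonneg α) (sq_nonneg n)) (sq_nonneg ‖g‖)]
  have final : ‖u - (α * n) • g + t • v‖ ^ 2 ≤
      (1 - c) * ‖w‖ ^ 2 + (2 * α / c) * (2 * ‖v‖ ^ 2 / s) + (2 * α / c) * (n ^ 2 * α * ‖g‖ ^ 2) := by
    calc ‖u - (α * n) • g + t • v‖ ^ 2
        ≤ ‖u + t • v‖ ^ 2 / s + (α * n * ‖g‖) ^ 2 / (1 - s) := le_trans e1 e2
      _ ≤ (‖u‖ ^ 2 / s / s + (t * ‖v‖) ^ 2 / (1 - s) / s) + (α * n * ‖g‖) ^ 2 / (1 - s) := by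
          linarith
      _ ≤ (1 - c) * ‖w‖ ^ 2 + (2 * α / c) * (2 * ‖v‖ ^ 2 / s) + (2 * α / c) * (n ^ 2 * α * ‖g‖ ^ 2) := by
          linarith
  calc ‖u - (α * n) • g + t • v‖ ^ 2
      ≤ (1 - c) * ‖w‖ ^ 2 + (2 * α / c) * (2 * ‖v‖ ^ 2 / s) + (2 * α / c) * (n ^ 2 * α * ‖g‖ ^ 2) :=
        final
    _ = (1 - c) * ‖w‖ ^ 2 + (2 * α / c) * (2 * ‖v‖ ^ 2 / s + n ^ 2 * α * ‖g‖ ^ 2) := by ring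
end

section
/- Let 0 ≤ δ₁ < δ₂ < 1 and a, ρ, W₁ > 0 be reals, and define α_i = a/(i+1)^{δ₂} for i ∈ ℕ and θ_ℓ = exp(−W₁ ℓ^{1−δ₁}) for ℓ ∈ ℕ. Set ℓ̄ = ⌈(ρ a/((1−δ₂) W₁))^{1/(δ₂−δ₁)}⌉ and κ = W₁ − (ρ a/(1−δ₂)) ℓ̄^{δ₁−δ₂}, and assume κ > 0. Then for every integer k ≥ ℓ̄ + 1: Σ_{ℓ=0}^{k} θ_ℓ · exp(−ρ Σ_{i=ℓ+1}^{k} α_i) ≤ C_θ · exp(−(ρ a/(1−δ₂)) (k+1)^{1−δ₂}), where C_θ = exp(ρ a) · exp(ρ a/(1−δ₂)) · ( Σ_{ℓ=0}^{ℓ̄} exp((ρ a/(1−δ₂)) ℓ^{1−δ₂} − W₁ ℓ^{1−δ₁}) + κ^{−1/(1−δ₁)} · Γ(1/(1−δ₁)) / (1−δ₁) ), Γ being the Gamma function and ⌈·⌉ the ceiling function. -/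
open Finset Real Set MeasureTheory

lemma aux_rpow_add_one {x p : ℝ} (hx : 0 ≤ x) (hp0 : 0 ≤ p) (hp1 : p ≤ 1) :
    (x + 1) ^ p ≤ x ^ p + 1 := by
  have h := NNReal.rpow_add_le_add_rpow x.toNNReal 1 hp0 hp1
  rw [← NNReal.coe_le_coe] at h
  push_cast at h
  rw [Real.one_rpow] at h
  rwa [Real.coe_toNNReal x hx] at h

lemma aux_sum_lb {δ₂ : ℝ} (h0 : 0 < δ₂) (h1 : δ₂ < 1) (ℓ k : ℕ) (hlk : ℓ ≤ k) :
    ((k : ℝ) + 1) ^ (1 - δ₂) / (1 - δ₂) - ((ℓ : ℝ) + 1) ^ (1 - δ₂) / (1 - δ₂) - 1 ≤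
      ∑ i ∈ Finset.Ico (ℓ + 1) (k + 1), ((i : ℝ) + 1) ^ (-δ₂) := by
  have hp : (0 : ℝ) < 1 - δ₂ := by linarith
  set n : ℕ := k + 1 - ℓ with hn
  have hnc : (n : ℝ) = (k : ℝ) + 1 - ℓ := by
    rw [hn]; push_cast [Nat.cast_sub (by omega : ℓ ≤ k + 1)]; ring
  have hanti : AntitoneOn (fun x : ℝ => (x + 1) ^ (-δ₂)) (Icc (ℓ : ℝ) ((ℓ : ℝ) + n)) := by
    intro x hx y hy hxy
    have hx0 : (0 : ℝ) ≤ x := le_trans (Nat.cast_nonneg ℓ) hx.1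
    exact Real.rpow_le_rpow_of_nonpos (by linarith) (by linarith) (by linarith)
  have hint := hanti.integral_le_sum
  have hsum1 : ∑ i ∈ Finset.range n, ((ℓ : ℝ) + i + 1) ^ (-δ₂) =
      ∑ i ∈ Finset.Ico ℓ (k + 1), ((i : ℝ) + 1) ^ (-δ₂) := by
    rw [Finset.sum_Ico_eq_sum_range]
    refine Finset.sum_congr rfl fun i _ => ?_
    push_cast; ring_nf
  have hval : ∫ x in (ℓ : ℝ)..((ℓ : ℝ) + n), (x + 1) ^ (-δ₂) =
      (((k : ℝ) + 2) ^ (1 - δ₂) - ((ℓ : ℝ) + 1) ^ (1 - δ₂)) / (1 - δ₂) := by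
    rw [intervalIntegral.integral_comp_add_right (fun x => x ^ (-δ₂)) 1,
      integral_rpow (Or.inl (by linarith))]
    rw [hnc]
    norm_num
    ring_nf
  have hbot := Finset.sum_eq_sum_Ico_succ_bot (by omega : ℓ < k + 1)
      (fun i : ℕ => ((i : ℝ) + 1) ^ (-δ₂))
  have hle1 : ((ℓ : ℝ) + 1) ^ (-δ₂) ≤ 1 :=
    Real.rpow_le_one_of_one_le_of_nonpos (le_add_of_nonneg_left (Nat.cast_nonneg ℓ)) (by linarith)
  have hmono : ((k : ℝ) + 1) ^ (1 - δ₂) / (1 - δ₂) ≤ ((k : ℝ) + 2) ^ (1 - δ₂) / (1 - δ₂) :=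
    (div_le_div_iff_of_pos_right hp).mpr
      (Real.rpow_le_rpow (by positivity) (by linarith) hp.le)
  rw [hval, hsum1, hbot, sub_div] at hint
  linarith

lemma aux_integrable {κ p : ℝ} (hκ : 0 < κ) (hp : 0 < p) :
    IntegrableOn (fun x : ℝ => Real.exp (-κ * x ^ p)) (Ioi (0 : ℝ)) := by
  rw [← integrableOn_Ioi_comp_rpow_iff _ (show p⁻¹ ≠ 0 by positivity)]
  have base : IntegrableOn (fun x : ℝ => Real.exp (-x) * x ^ (p⁻¹ - 1)) (Ioi (0 : ℝ)) :=
    Real.GammaIntegral_convergent (by positivity)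
  have scaled : IntegrableOn (fun x : ℝ => Real.exp (-(κ * x)) * (κ * x) ^ (p⁻¹ - 1))
      (Ioi (0 : ℝ)) := by
    have h := (integrableOn_Ioi_comp_mul_left_iff
      (fun x : ℝ => Real.exp (-x) * x ^ (p⁻¹ - 1)) 0 hκ).mpr (by rwa [mul_zero])
    exact h
  have hh : IntegrableOn
      (fun x : ℝ => |p⁻¹| * κ ^ (1 - p⁻¹) * (Real.exp (-(κ * x)) * (κ * x) ^ (p⁻¹ - 1)))
      (Ioi (0 : ℝ)) := scaled.const_mul _
  refine hh.congr_fun (fun x hx => ?_) measurableSet_Ioi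
  have hx0 : (0 : ℝ) < x := hx
  have h1 : (x ^ p⁻¹ : ℝ) ^ p = x := by
    rw [← Real.rpow_mul hx0.le, inv_mul_cancel₀ hp.ne', Real.rpow_one]
  have h2 : (κ * x) ^ (p⁻¹ - 1) = κ ^ (p⁻¹ - 1) * x ^ (p⁻¹ - 1) :=
    Real.mul_rpow hκ.le hx0.le
  have h3 : κ ^ (1 - p⁻¹) * κ ^ (p⁻¹ - 1) = 1 := by
    rw [← Real.rpow_add hκ]; norm_num
  simp only [smul_eq_mul, h1, h2, neg_mul]
  linear_combination (|p⁻¹| * x ^ (p⁻¹ - 1) * Real.exp (-(κ * x))) * h3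

lemma aux_tail {κ p : ℝ} (hκ : 0 < κ) (hp0 : 0 < p) (m k : ℕ) (hmk : m + 1 ≤ k) :
    ∑ ℓ ∈ Finset.Ico (m + 1) (k + 1), Real.exp (-κ * (ℓ : ℝ) ^ p) ≤
      κ ^ (-(1 : ℝ) / p) * Real.Gamma (1 / p) / p := by
  set n : ℕ := k - m with hn
  have hanti : AntitoneOn (fun x : ℝ => Real.exp (-κ * x ^ p))
      (Icc (m : ℝ) ((m : ℝ) + n)) := by
    intro x hx y hy hxy
    have hx0 : (0 : ℝ) ≤ x := le_trans (Nat.cast_nonneg m) hx.1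
    have := Real.rpow_le_rpow hx0 hxy hp0.le
    exact Real.exp_le_exp.mpr (by nlinarith)
  have hint := hanti.sum_le_integral
  have hsum : ∑ ℓ ∈ Finset.Ico (m + 1) (k + 1), Real.exp (-κ * (ℓ : ℝ) ^ p) =
      ∑ i ∈ Finset.range n, Real.exp (-κ * ((m : ℝ) + ((i : ℕ) + 1 : ℕ)) ^ p) := by
    rw [Finset.sum_Ico_eq_sum_range]
    have : k + 1 - (m + 1) = n := by omega
    rw [this]
    refine Finset.sum_congr rfl fun i _ => ?_
    push_cast; ring_nf
  have hval : ∫ x in (m : ℝ)..((m : ℝ) + n), Real.exp (-κ * x ^ p) ≤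
      κ ^ (-(1 : ℝ) / p) * Real.Gamma (1 / p) / p := by
    rw [intervalIntegral.integral_of_le (le_add_of_nonneg_right (Nat.cast_nonneg n))]
    have hsub : Ioc (m : ℝ) ((m : ℝ) + n) ⊆ Ioi (0 : ℝ) := fun x hx =>
      lt_of_le_of_lt (Nat.cast_nonneg m) hx.1
    have hmono : ∫ x in Ioc (m : ℝ) ((m : ℝ) + n), Real.exp (-κ * x ^ p) ≤
        ∫ x in Ioi (0 : ℝ), Real.exp (-κ * x ^ p) :=
      setIntegral_mono_set (aux_integrable hκ hp0)
        (Filter.Eventually.of_forall fun x => (Real.exp_pos _).le) hsub.eventuallyLE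
    refine hmono.trans_eq ?_
    rw [integral_exp_neg_mul_rpow hp0 hκ,
      Real.Gamma_add_one (ne_of_gt (by positivity : (0 : ℝ) < 1 / p))]
    ring
  calc ∑ ℓ ∈ Finset.Ico (m + 1) (k + 1), Real.exp (-κ * (ℓ : ℝ) ^ p)
      = ∑ i ∈ Finset.range n, Real.exp (-κ * ((m : ℝ) + ((i : ℕ) + 1 : ℕ)) ^ p) := hsum
    _ ≤ ∫ x in (m : ℝ)..((m : ℝ) + n), Real.exp (-κ * x ^ p) := hint
    _ ≤ _ := hval

/-- Bound on the discounted sum of the exponentially decaying consensus-error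
terms `θ_ℓ = exp(-W₁ ℓ^{1-δ₁})`, from the proof of Theorem 2. -/
theorem stmt12 (δ₁ δ₂ a ρ W₁ : ℝ)
    (hδ₁ : 0 ≤ δ₁) (h12 : δ₁ < δ₂) (hδ₂ : δ₂ < 1)
    (ha : 0 < a) (hρ : 0 < ρ) (hW₁ : 0 < W₁)
    (lbar : ℕ)
    (hlbar : lbar = Nat.ceil ((ρ * a / ((1 - δ₂) * W₁)) ^ ((1 : ℝ) / (δ₂ - δ₁))))
    (κ : ℝ)
    (hκdef : κ = W₁ - (ρ * a / (1 - δ₂)) * (lbar : ℝ) ^ (δ₁ - δ₂))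
    (hκ : 0 < κ) :
    ∀ k : ℕ, lbar + 1 ≤ k →
      ∑ ℓ ∈ Finset.range (k + 1),
          Real.exp (-W₁ * (ℓ : ℝ) ^ (1 - δ₁)) *
            Real.exp (-ρ * ∑ i ∈ Finset.Ico (ℓ + 1) (k + 1), a / ((i : ℝ) + 1) ^ δ₂) ≤
        (Real.exp (ρ * a) * Real.exp (ρ * a / (1 - δ₂)) *
            ((∑ ℓ ∈ Finset.range (lbar + 1),
                Real.exp ((ρ * a / (1 - δ₂)) * (ℓ : ℝ) ^ (1 - δ₂) -
                  W₁ * (ℓ : ℝ) ^ (1 - δ₁))) +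
              κ ^ (-(1 : ℝ) / (1 - δ₁)) * Real.Gamma (1 / (1 - δ₁)) / (1 - δ₁))) *
          Real.exp (-(ρ * a / (1 - δ₂)) * ((k : ℝ) + 1) ^ (1 - δ₂)) := by
  have hp₂ : (0 : ℝ) < 1 - δ₂ := by linarith
  have hp₁ : (0 : ℝ) < 1 - δ₁ := by linarith
  have hδ₂pos : 0 < δ₂ := lt_of_le_of_lt hδ₁ h12
  set c : ℝ := ρ * a / (1 - δ₂) with hc
  have hcpos : 0 < c := by positivity
  have hlbar1 : 1 ≤ lbar := by
    rw [hlbar]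
    exact Nat.one_le_iff_ne_zero.mpr (Nat.pos_iff_ne_zero.mp
      (Nat.ceil_pos.mpr (Real.rpow_pos_of_pos (by positivity) _)))
  intro k hk
  -- the auxiliary summand
  set g : ℕ → ℝ := fun ℓ => Real.exp (c * (ℓ : ℝ) ^ (1 - δ₂) - W₁ * (ℓ : ℝ) ^ (1 - δ₁))
    with hg
  -- per-term bound
  have key1 : ∀ ℓ ∈ Finset.range (k + 1),
      Real.exp (-W₁ * (ℓ : ℝ) ^ (1 - δ₁)) *
          Real.exp (-ρ * ∑ i ∈ Finset.Ico (ℓ + 1) (k + 1), a / ((i : ℝ) + 1) ^ δ₂) ≤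
        Real.exp (ρ * a) * Real.exp c * Real.exp (-c * ((k : ℝ) + 1) ^ (1 - δ₂)) * g ℓ := by
    intro ℓ hℓ
    have hℓk : ℓ ≤ k := Nat.lt_succ_iff.mp (Finset.mem_range.mp hℓ)
    have hrw : ∑ i ∈ Finset.Ico (ℓ + 1) (k + 1), a / ((i : ℝ) + 1) ^ δ₂ =
        a * ∑ i ∈ Finset.Ico (ℓ + 1) (k + 1), ((i : ℝ) + 1) ^ (-δ₂) := by
      rw [Finset.mul_sum]
      refine Finset.sum_congr rfl fun i _ => ?_
      rw [Real.rpow_neg (by positivity), div_eq_mul_inv]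
    have hsum := aux_sum_lb hδ₂pos hδ₂ ℓ k hℓk
    have hsub : ((ℓ : ℝ) + 1) ^ (1 - δ₂) ≤ (ℓ : ℝ) ^ (1 - δ₂) + 1 :=
      aux_rpow_add_one (Nat.cast_nonneg ℓ) hp₂.le (by linarith)
    rw [hg, ← Real.exp_add, ← Real.exp_add, ← Real.exp_add, ← Real.exp_add]
    apply Real.exp_le_exp.mpr
    rw [hrw]
    have h1 := mul_le_mul_of_nonneg_left hsum (by positivity : (0 : ℝ) ≤ ρ * a)
    have e1 : ρ * a * (((k : ℝ) + 1) ^ (1 - δ₂) / (1 - δ₂) -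
        ((ℓ : ℝ) + 1) ^ (1 - δ₂) / (1 - δ₂) - 1) =
        c * ((k : ℝ) + 1) ^ (1 - δ₂) - c * ((ℓ : ℝ) + 1) ^ (1 - δ₂) - ρ * a := by
      rw [hc]; field_simp
    rw [e1] at h1
    have h2 := mul_le_mul_of_nonneg_left hsub hcpos.le
    nlinarith [h1, h2]
  have step1 : ∑ ℓ ∈ Finset.range (k + 1),
      Real.exp (-W₁ * (ℓ : ℝ) ^ (1 - δ₁)) *
        Real.exp (-ρ * ∑ i ∈ Finset.Ico (ℓ + 1) (k + 1), a / ((i : ℝ) + 1) ^ δ₂) ≤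
      Real.exp (ρ * a) * Real.exp c * Real.exp (-c * ((k : ℝ) + 1) ^ (1 - δ₂)) *
        ∑ ℓ ∈ Finset.range (k + 1), g ℓ := by
    rw [Finset.mul_sum]
    exact Finset.sum_le_sum key1
  -- split the sum
  have hsplit : ∑ ℓ ∈ Finset.range (k + 1), g ℓ =
      (∑ ℓ ∈ Finset.range (lbar + 1), g ℓ) + ∑ ℓ ∈ Finset.Ico (lbar + 1) (k + 1), g ℓ :=
    (Finset.sum_range_add_sum_Ico g (by omega)).symm
  -- tail bound
  have htail : ∑ ℓ ∈ Finset.Ico (lbar + 1) (k + 1), g ℓ ≤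
      κ ^ (-(1 : ℝ) / (1 - δ₁)) * Real.Gamma (1 / (1 - δ₁)) / (1 - δ₁) := by
    have hterm : ∀ ℓ ∈ Finset.Ico (lbar + 1) (k + 1),
        g ℓ ≤ Real.exp (-κ * (ℓ : ℝ) ^ (1 - δ₁)) := by
      intro ℓ hℓ
      obtain ⟨hℓ1, hℓ2⟩ := Finset.mem_Ico.mp hℓ
      have hℓpos : (0 : ℝ) < (ℓ : ℝ) := by
        have : 1 ≤ ℓ := by omega
        exact_mod_cast Nat.pos_iff_ne_zero.mpr (by omega)
      have hlbarpos : (0 : ℝ) < (lbar : ℝ) := by exact_mod_cast Nat.pos_of_ne_zero (by omega)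
      have hcast : (lbar : ℝ) ≤ (ℓ : ℝ) := by exact_mod_cast (by omega : lbar ≤ ℓ)
      have hbase : (ℓ : ℝ) ^ (δ₁ - δ₂) ≤ (lbar : ℝ) ^ (δ₁ - δ₂) :=
        Real.rpow_le_rpow_of_nonpos hlbarpos hcast (by linarith)
      have hsplitp : (ℓ : ℝ) ^ (1 - δ₂) = (ℓ : ℝ) ^ (δ₁ - δ₂) * (ℓ : ℝ) ^ (1 - δ₁) := by
        rw [← Real.rpow_add hℓpos]; ring_nf
      have h2 : c * (ℓ : ℝ) ^ (1 - δ₂) ≤ (W₁ - κ) * (ℓ : ℝ) ^ (1 - δ₁) := by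
        rw [hsplitp, ← mul_assoc]
        have hWκ : W₁ - κ = c * (lbar : ℝ) ^ (δ₁ - δ₂) := by rw [hκdef, hc]; ring
        rw [hWκ]
        exact mul_le_mul_of_nonneg_right
          (mul_le_mul_of_nonneg_left hbase hcpos.le)
          (Real.rpow_nonneg hℓpos.le _)
      exact Real.exp_le_exp.mpr (by nlinarith)
    calc ∑ ℓ ∈ Finset.Ico (lbar + 1) (k + 1), g ℓ
        ≤ ∑ ℓ ∈ Finset.Ico (lbar + 1) (k + 1), Real.exp (-κ * (ℓ : ℝ) ^ (1 - δ₁)) :=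
          Finset.sum_le_sum hterm
      _ ≤ _ := aux_tail hκ hp₁ lbar k hk
  -- put everything together
  have hS : (0 : ℝ) ≤ ∑ ℓ ∈ Finset.range (lbar + 1), g ℓ :=
    Finset.sum_nonneg fun ℓ _ => (Real.exp_pos _).le
  calc ∑ ℓ ∈ Finset.range (k + 1),
        Real.exp (-W₁ * (ℓ : ℝ) ^ (1 - δ₁)) *
          Real.exp (-ρ * ∑ i ∈ Finset.Ico (ℓ + 1) (k + 1), a / ((i : ℝ) + 1) ^ δ₂)
      ≤ Real.exp (ρ * a) * Real.exp c * Real.exp (-c * ((k : ℝ) + 1) ^ (1 - δ₂)) *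
          ∑ ℓ ∈ Finset.range (k + 1), g ℓ := step1
    _ ≤ Real.exp (ρ * a) * Real.exp c * Real.exp (-c * ((k : ℝ) + 1) ^ (1 - δ₂)) *
          ((∑ ℓ ∈ Finset.range (lbar + 1), g ℓ) +
            κ ^ (-(1 : ℝ) / (1 - δ₁)) * Real.Gamma (1 / (1 - δ₁)) / (1 - δ₁)) := by
        refine mul_le_mul_of_nonneg_left ?_ (by positivity)
        rw [hsplit]
        exact add_le_add_right htail _
    _ = (Real.exp (ρ * a) * Real.exp c *
          ((∑ ℓ ∈ Finset.range (lbar + 1), g ℓ) +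
            κ ^ (-(1 : ℝ) / (1 - δ₁)) * Real.Gamma (1 / (1 - δ₁)) / (1 - δ₁))) *
          Real.exp (-c * ((k : ℝ) + 1) ^ (1 - δ₂)) := by ring
end

section
/- Let a, ρ > 0 and δ₁ ≥ 0, δ₂ be reals with 2δ₁ < δ₂ < 1, and define α_i = a/(i+1)^{δ₂} for i ∈ ℕ. Set k̄ = ⌈((2δ₂−2δ₁)/(ρ a))^{1/(1−δ₂)}⌉. Then for every integer k ≥ k̄ + 1: Σ_{ℓ=k̄+1}^{k} (1/ℓ^{2δ₂−2δ₁}) · exp(−ρ Σ_{i=ℓ+1}^{k} α_i) ≤ (2(δ₂−δ₁)/(ρ a δ₂)) · exp((ρ a/(1−δ₂)) · 2^{1−δ₂}) · (k+1)^{−(δ₂−2δ₁)}, where an empty inner sum equals 0 and ⌈·⌉ denotes the ceiling function. -/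
open Finset

lemma stmt13_core (c δ₂ γ L : ℝ) (hc : 0 < c) (h0 : 0 < δ₂) (h1 : δ₂ < 1)
    (hγ : 0 < γ) (hγδ : γ ≤ δ₂) (hL : 2 ≤ L)
    (hcL : γ + δ₂ ≤ c * L ^ (1 - δ₂)) :
    c * δ₂ / (γ + δ₂) * Real.exp (-(c / (1 - δ₂) * 2 ^ (1 - δ₂))) * L ^ (-(γ + δ₂))
      ≤ (L + 1) ^ (-γ) - L ^ (-γ) * Real.exp (-(c / (L + 1) ^ δ₂)) := by
  have hL0 : (0:ℝ) < L := by linarith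
  have hL1 : (0:ℝ) < L + 1 := by linarith
  set β := γ + δ₂ with hβ
  have hβ0 : 0 < β := by positivity
  set B := c / (L + 1) ^ δ₂ with hBdef
  set E := c / (1 - δ₂) * 2 ^ (1 - δ₂) with hEdef
  set P := c * L ^ (-δ₂) with hPdef
  have hLp : (0:ℝ) < L ^ δ₂ := Real.rpow_pos_of_pos hL0 _
  have hL1p : (0:ℝ) < (L+1) ^ δ₂ := Real.rpow_pos_of_pos hL1 _
  have hB0 : 0 < B := by positivity
  have hP0 : 0 < P := by positivity
  have h1δ : (0:ℝ) < 1 - δ₂ := by linarith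
  -- log difference
  have hd0 : 0 ≤ Real.log (L+1) - Real.log L := by
    have := Real.log_le_log hL0 (by linarith : L ≤ L + 1)
    linarith
  have hd : Real.log (L+1) - Real.log L ≤ 1 / L := by
    have h := Real.log_le_sub_one_of_pos (show (0:ℝ) < (L+1)/L by positivity)
    rw [Real.log_div (by linarith) (by linarith)] at h
    have : (L+1)/L - 1 = 1/L := by field_simp; ring
    linarith
  -- rpow as exp
  have hrL : ∀ t : ℝ, L ^ t = Real.exp (Real.log L * t) := fun t => Real.rpow_def_of_pos hL0 t
  have hrL1 : ∀ t : ℝ, (L+1) ^ t = Real.exp (Real.log (L+1) * t) := fun t => Real.rpow_def_of_pos hL1 t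
  -- (f3) : P * (1 - δ₂ / L) ≤ B
  have hf3 : P * (1 - δ₂ / L) ≤ B := by
    have hBeq : B = c * (L+1) ^ (-δ₂) := by
      rw [Real.rpow_neg (le_of_lt hL1)]; rw [hBdef]; ring
    have e1 : (L+1) ^ (-δ₂) = L ^ (-δ₂) * Real.exp (-δ₂ * (Real.log (L+1) - Real.log L)) := by
      rw [hrL1, hrL, ← Real.exp_add]; ring_nf
    have e2 : 1 - δ₂ * (Real.log (L+1) - Real.log L) ≤ Real.exp (-δ₂ * (Real.log (L+1) - Real.log L)) := by
      have := Real.add_one_le_exp (-δ₂ * (Real.log (L+1) - Real.log L))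
      linarith
    have e3 : 1 - δ₂ / L ≤ 1 - δ₂ * (Real.log (L+1) - Real.log L) := by
      have h4 : δ₂ * (Real.log (L+1) - Real.log L) ≤ δ₂ * (1/L) :=
        mul_le_mul_of_nonneg_left hd (le_of_lt h0)
      have h5 : δ₂ * (1/L) = δ₂ / L := by ring
      linarith
    calc P * (1 - δ₂ / L) ≤ P * Real.exp (-δ₂ * (Real.log (L+1) - Real.log L)) :=
          mul_le_mul_of_nonneg_left (le_trans e3 e2) (le_of_lt hP0)
      _ = c * (L+1) ^ (-δ₂) := by rw [e1, hPdef]; ring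
      _ = B := hBeq.symm
  -- (f4) : γ / L ≤ γ / β * P
  have hPL : P * L = c * L ^ (1 - δ₂) := by
    rw [hPdef, show (1:ℝ) - δ₂ = -δ₂ + 1 by ring, Real.rpow_add hL0, Real.rpow_one]; ring
  have hf4 : γ / L ≤ γ / β * P := by
    rw [div_le_iff₀ hL0, mul_assoc, hPL]
    calc γ = γ / β * β := by field_simp
      _ ≤ γ / β * (c * L ^ (1-δ₂)) := mul_le_mul_of_nonneg_left hcL (by positivity)
  -- identity
  have hid : (δ₂/β) * (1 - β/L) = (1 - δ₂/L) - γ/β := by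
    rw [hβ]; field_simp; ring
  -- main1
  have hmain1 : P * ((δ₂/β) * (1 - β/L)) ≤ B - γ/L := by
    have h6 : P * ((δ₂/β) * (1 - β/L)) = P * (1 - δ₂/L) - γ/β * P := by rw [hid]; ring
    linarith [hf3, hf4]
  -- (T1) : exp (B - E) ≤ 1 - β / L
  have hβL : β / L ≤ δ₂ := by
    rw [div_le_iff₀ hL0]; nlinarith
  have h1βL : 0 < 1 - β / L := by linarith
  have hβLnn : 0 ≤ β / L := by positivity
  have hT1 : Real.exp (B - E) ≤ 1 - β / L := by
    have hlog : 1 - 1/(1 - β/L) ≤ Real.log (1 - β/L) := by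
      have h := Real.log_le_sub_one_of_pos (show (0:ℝ) < (1 - β/L)⁻¹ by positivity)
      rw [Real.log_inv] at h
      rw [one_div]
      linarith
    have hkey : β / L ≤ (1 - δ₂) * (E - B) := by
      have h2a : (1 - δ₂) * E = c * 2 ^ (1 - δ₂) := by
        rw [hEdef]; field_simp
      have h2b : (2:ℝ) ^ (1 - δ₂) = 2 * 2 ^ (-δ₂) := by
        rw [show (1:ℝ) - δ₂ = -δ₂ + 1 by ring, Real.rpow_add (by norm_num : (0:ℝ) < 2),
          Real.rpow_one]; ring
      have h2p : (0:ℝ) < (2:ℝ) ^ δ₂ := Real.rpow_pos_of_pos (by norm_num) _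
      have h2neg : (2:ℝ) ^ (-δ₂) = ((2:ℝ) ^ δ₂)⁻¹ := Real.rpow_neg (by norm_num) _
      have h2L : (2:ℝ) ^ δ₂ ≤ (L+1) ^ δ₂ :=
        Real.rpow_le_rpow (by norm_num) (by linarith) (le_of_lt h0)
      have h2c : B ≤ c * 2 ^ (-δ₂) := by
        rw [hBdef, h2neg, div_le_iff₀ hL1p]
        calc c = c * ((2:ℝ)^δ₂)⁻¹ * (2:ℝ)^δ₂ := by field_simp
          _ ≤ c * ((2:ℝ)^δ₂)⁻¹ * (L+1)^δ₂ :=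
              mul_le_mul_of_nonneg_left h2L (by positivity)
      have h2LL : (2:ℝ) ^ δ₂ ≤ L ^ δ₂ :=
        Real.rpow_le_rpow (by norm_num) (by linarith) (le_of_lt h0)
      have h2d : β / L ≤ c * 2 ^ (-δ₂) := by
        have s1 : β / L ≤ P := by
          rw [div_le_iff₀ hL0]
          calc β ≤ c * L ^ (1-δ₂) := hcL
            _ = P * L := hPL.symm
        have s2 : P ≤ c * 2 ^ (-δ₂) := by
          rw [hPdef, h2neg, Real.rpow_neg (le_of_lt hL0)]
          have : (L ^ δ₂)⁻¹ ≤ ((2:ℝ)^δ₂)⁻¹ := by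
            apply inv_anti₀ h2p h2LL
          exact mul_le_mul_of_nonneg_left this (le_of_lt hc)
        linarith
      have h2a' : (1-δ₂) * E = 2 * (c * 2 ^ (-δ₂)) := by rw [h2a, h2b]; ring
      have p1 : 0 ≤ δ₂ * B := by positivity
      linarith [h2a', h2c, h2d, p1]
    have hstep1 : (β/L)/(1-δ₂) ≤ E - B := by
      rw [div_le_iff₀ h1δ]; nlinarith [hkey]
    have hstep2 : (β/L)/(1-β/L) ≤ (β/L)/(1-δ₂) := by
      gcongr
    have heqgen : ∀ u:ℝ, 1-u ≠ 0 → -(u/(1-u)) = 1 - 1/(1-u) := by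
      intro u hu; field_simp; ring
    have heq : -((β/L)/(1-β/L)) = 1 - 1/(1-β/L) := heqgen _ (ne_of_gt h1βL)
    have : B - E ≤ Real.log (1 - β/L) := by linarith
    calc Real.exp (B - E) ≤ Real.exp (Real.log (1 - β/L)) := Real.exp_le_exp.mpr this
      _ = 1 - β/L := Real.exp_log h1βL
  -- main2 : chord bound
  have hmain2 : Real.exp (-(γ * Real.log L) - B) * (B - γ/L)
      ≤ (L+1) ^ (-γ) - L ^ (-γ) * Real.exp (-B) := by
    have hx : (L+1) ^ (-γ) = Real.exp (-(γ * Real.log (L+1))) := by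
      rw [hrL1]; congr 1; ring
    have hy : L ^ (-γ) * Real.exp (-B) = Real.exp (-(γ * Real.log L) - B) := by
      rw [hrL, ← Real.exp_add]; congr 1; ring
    set x := -(γ * Real.log (L+1)) with hxdef
    set y := -(γ * Real.log L) - B with hydef
    have hchord : Real.exp y * (x - y) ≤ Real.exp x - Real.exp y := by
      have h1' : Real.exp x = Real.exp y * Real.exp (x - y) := by
        rw [← Real.exp_add]; congr 1; ring
      have h2' := Real.add_one_le_exp (x - y)
      have h3' : Real.exp y * (1 + (x-y)) ≤ Real.exp y * Real.exp (x-y) :=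
        mul_le_mul_of_nonneg_left (by linarith) (Real.exp_pos y).le
      linarith [h1', h3']
    have hxy : B - γ/L ≤ x - y := by
      have : γ * (Real.log (L+1) - Real.log L) ≤ γ * (1/L) :=
        mul_le_mul_of_nonneg_left hd (le_of_lt hγ)
      rw [hxdef, hydef]
      have h7 : γ * (1/L) = γ / L := by ring
      linarith
    rw [hx, hy]
    calc Real.exp y * (B - γ/L) ≤ Real.exp y * (x - y) :=
          mul_le_mul_of_nonneg_left hxy (Real.exp_pos y).le
      _ ≤ Real.exp x - Real.exp y := hchord
  -- final assembly
  have hfin : c * δ₂ / β * Real.exp (-E) * L ^ (-β)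
      = Real.exp (-(γ * Real.log L) - B) * (P * ((δ₂/β) * Real.exp (B - E))) := by
    rw [hPdef, hrL (-β), hrL (-δ₂)]
    rw [show Real.exp (-(γ * Real.log L) - B) * (c * Real.exp (Real.log L * -δ₂) * (δ₂/β * Real.exp (B - E)))
        = c * δ₂ / β * (Real.exp (-(γ * Real.log L) - B) * Real.exp (Real.log L * -δ₂) * Real.exp (B - E)) by ring]
    rw [← Real.exp_add, ← Real.exp_add]
    rw [show -(γ * Real.log L) - B + Real.log L * -δ₂ + (B - E) = (Real.log L * -β) + -E by rw [hβ]; ring]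
    rw [Real.exp_add]
    ring
  rw [hfin]
  calc Real.exp (-(γ * Real.log L) - B) * (P * ((δ₂/β) * Real.exp (B - E)))
      ≤ Real.exp (-(γ * Real.log L) - B) * (P * ((δ₂/β) * (1 - β/L))) := by
        apply mul_le_mul_of_nonneg_left _ (Real.exp_pos _).le
        apply mul_le_mul_of_nonneg_left _ hP0.le
        exact mul_le_mul_of_nonneg_left hT1 (by positivity)
    _ ≤ Real.exp (-(γ * Real.log L) - B) * (B - γ/L) :=
        mul_le_mul_of_nonneg_left hmain1 (Real.exp_pos _).le
    _ ≤ (L+1) ^ (-γ) - L ^ (-γ) * Real.exp (-B) := hmain2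

/-- Tail bound on the discounted sum of polynomially decaying error terms,
from the proof of Theorem 2. -/
theorem stmt13 (a ρ δ₁ δ₂ : ℝ)
    (ha : 0 < a) (hρ : 0 < ρ) (hδ₁ : 0 ≤ δ₁) (hδ : 2 * δ₁ < δ₂) (hδ₂ : δ₂ < 1)
    (kbar : ℕ)
    (hkbar : kbar = Nat.ceil (((2 * δ₂ - 2 * δ₁) / (ρ * a)) ^ ((1 : ℝ) / (1 - δ₂)))) :
    ∀ k : ℕ, kbar + 1 ≤ k →
      ∑ ℓ ∈ Finset.Icc (kbar + 1) k,
          (1 / (ℓ : ℝ) ^ (2 * δ₂ - 2 * δ₁)) *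
            Real.exp (-ρ * ∑ i ∈ Finset.Ico (ℓ + 1) (k + 1), a / ((i : ℝ) + 1) ^ δ₂) ≤
        (2 * (δ₂ - δ₁) / (ρ * a * δ₂)) *
          Real.exp ((ρ * a / (1 - δ₂)) * 2 ^ (1 - δ₂)) *
          ((k : ℝ) + 1) ^ (-(δ₂ - 2 * δ₁)) := by
  intro k hk
  have hδ₂pos : 0 < δ₂ := by linarith
  have hc : 0 < ρ * a := mul_pos hρ ha
  set c : ℝ := ρ * a with hcdef
  set γ : ℝ := δ₂ - 2 * δ₁ with hγdef
  set β : ℝ := 2 * δ₂ - 2 * δ₁ with hβdef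
  have hγpos : 0 < γ := by rw [hγdef]; linarith
  have hβpos : 0 < β := by rw [hβdef]; linarith
  have hβγ : β = γ + δ₂ := by rw [hβdef, hγdef]; ring
  have hγδ : γ ≤ δ₂ := by rw [hγdef]; linarith
  have h1δ : (0:ℝ) < 1 - δ₂ := by linarith
  set X : ℝ := (β / c) ^ ((1:ℝ) / (1 - δ₂)) with hXdef
  have hβc : 0 < β / c := div_pos hβpos hc
  have hX0 : 0 < X := Real.rpow_pos_of_pos hβc _
  have hkX : X ≤ (kbar : ℝ) := by rw [hkbar]; exact Nat.le_ceil X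
  have hkb1 : 1 ≤ kbar := by
    rw [hkbar]; exact Nat.one_le_iff_ne_zero.mpr (by
      intro h
      have := Nat.ceil_eq_zero.mp h
      exact absurd this (by push_neg; exact hX0))
  set S : ℕ → ℝ := fun n => ∑ i ∈ Finset.Ico (n+1) (k+1), a / ((i:ℝ)+1) ^ δ₂ with hSdef
  set w : ℕ → ℝ := fun n => ((n:ℝ)+1) ^ (-γ) * Real.exp (-ρ * S n) with hwdef
  set K : ℝ := β / (c * δ₂) * Real.exp (c / (1-δ₂) * 2 ^ (1-δ₂)) with hKdef
  have hK0 : 0 < K := by positivity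
  -- per-step key inequality
  have key : ∀ j ∈ Finset.Ico kbar k,
      (1 / ((j+1 : ℕ) : ℝ) ^ β) * Real.exp (-ρ * S (j+1)) ≤ K * (w (j+1) - w j) := by
    intro j hj
    obtain ⟨hj1, hj2⟩ := Finset.mem_Ico.mp hj
    set L : ℝ := (j:ℝ) + 1 with hLdef
    have hj1' : (1:ℝ) ≤ (j:ℝ) := by exact_mod_cast le_trans hkb1 hj1
    have hL2 : 2 ≤ L := by rw [hLdef]; linarith
    have hL0 : 0 < L := by linarith
    have hXL : X ≤ L := by
      have : (kbar:ℝ) ≤ (j:ℝ) := by exact_mod_cast hj1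
      rw [hLdef]; linarith
    have hcL : γ + δ₂ ≤ c * L ^ (1 - δ₂) := by
      have h1' : X ^ (1-δ₂) ≤ L ^ (1-δ₂) := Real.rpow_le_rpow hX0.le hXL (by linarith)
      have hexp : (1:ℝ) / (1-δ₂) * (1-δ₂) = 1 := by field_simp
      have h2' : X ^ (1-δ₂) = β / c := by
        rw [hXdef, ← Real.rpow_mul hβc.le, hexp, Real.rpow_one]
      rw [h2'] at h1'
      rw [← hβγ]
      calc β = β / c * c := by field_simp
        _ ≤ L ^ (1-δ₂) * c := mul_le_mul_of_nonneg_right h1' hc.le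
        _ = c * L ^ (1-δ₂) := by ring
    -- peel the bottom term of S j
    have hsplit : S j = a / (L+1) ^ δ₂ + S (j+1) := by
      rw [hSdef]
      simp only
      rw [Finset.sum_eq_sum_Ico_succ_bot (by omega : j + 1 < k + 1)]
      push_cast
      rw [hLdef]
    have hcast : ((j+1 : ℕ) : ℝ) = L := by rw [hLdef]; push_cast; ring
    have hw : w (j+1) - w j
        = Real.exp (-ρ * S (j+1)) * ((L+1) ^ (-γ) - L ^ (-γ) * Real.exp (-(c / (L+1) ^ δ₂))) := by
      rw [hwdef]
      simp only
      rw [hsplit, hcast]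
      have : -ρ * (a / (L+1) ^ δ₂ + S (j+1)) = -(c / (L+1) ^ δ₂) + -ρ * S (j+1) := by
        rw [hcdef]; field_simp; ring
      rw [this, Real.exp_add]
      ring
    have hcore := stmt13_core c δ₂ γ L hc hδ₂pos hδ₂ hγpos hγδ hL2 hcL
    rw [hcast, hw]
    have hU0 : (0:ℝ) < Real.exp (-ρ * S (j+1)) := Real.exp_pos _
    have hKcoef : K * (c * δ₂ / (γ + δ₂) * Real.exp (-(c / (1-δ₂) * 2 ^ (1-δ₂))) * L ^ (-(γ+δ₂)))
        = 1 / L ^ β := by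
      rw [hKdef, ← hβγ]
      rw [Real.rpow_neg hL0.le]
      rw [show β / (c*δ₂) * Real.exp (c/(1-δ₂)*2^(1-δ₂)) * (c*δ₂/β * Real.exp (-(c/(1-δ₂)*2^(1-δ₂))) * (L^β)⁻¹)
          = (Real.exp (c/(1-δ₂)*2^(1-δ₂)) * Real.exp (-(c/(1-δ₂)*2^(1-δ₂)))) * (β/(c*δ₂) * (c*δ₂/β)) * (L^β)⁻¹ by ring]
      rw [← Real.exp_add, add_neg_cancel, Real.exp_zero]
      have hβne : β ≠ 0 := ne_of_gt hβpos
      have hcδne : c * δ₂ ≠ 0 := by positivity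
      field_simp
    have hKD : 1 / L ^ β ≤ K * ((L+1) ^ (-γ) - L ^ (-γ) * Real.exp (-(c / (L+1) ^ δ₂))) := by
      calc 1 / L ^ β = K * (c * δ₂ / (γ + δ₂) * Real.exp (-(c / (1-δ₂) * 2 ^ (1-δ₂))) * L ^ (-(γ+δ₂))) :=
            hKcoef.symm
        _ ≤ _ := mul_le_mul_of_nonneg_left hcore hK0.le
    calc 1 / L ^ β * Real.exp (-ρ * S (j+1))
        ≤ (K * ((L+1) ^ (-γ) - L ^ (-γ) * Real.exp (-(c / (L+1) ^ δ₂)))) * Real.exp (-ρ * S (j+1)) :=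
          mul_le_mul_of_nonneg_right hKD hU0.le
      _ = K * (Real.exp (-ρ * S (j+1)) * ((L+1) ^ (-γ) - L ^ (-γ) * Real.exp (-(c / (L+1) ^ δ₂)))) := by
          ring
  -- reindex the sum
  have hre : ∑ ℓ ∈ Finset.Icc (kbar+1) k,
        (1 / (ℓ : ℝ) ^ β) * Real.exp (-ρ * S ℓ)
      = ∑ j ∈ Finset.Ico kbar k, (1 / ((j+1 : ℕ) : ℝ) ^ β) * Real.exp (-ρ * S (j+1)) := by
    rw [← Finset.Ico_add_one_right_eq_Icc]
    rw [show Finset.Ico (kbar+1) (k+1) = Finset.map (addRightEmbedding 1) (Finset.Ico kbar k) by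
      rw [Finset.map_add_right_Ico]]
    rw [Finset.sum_map]
    rfl
  have hkk : kbar ≤ k := by omega
  have htel : ∑ j ∈ Finset.Ico kbar k, (w (j+1) - w j) = w k - w kbar := by
    rw [Finset.sum_Ico_eq_sub _ hkk, Finset.sum_range_sub, Finset.sum_range_sub]
    ring
  have hwk : w k = ((k:ℝ)+1) ^ (-γ) := by
    rw [hwdef]
    simp only
    rw [hSdef]
    simp only [Finset.Ico_self, Finset.sum_empty, mul_zero, Real.exp_zero, mul_one]
  have hwkb : 0 ≤ w kbar := by
    rw [hwdef]
    simp only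
    positivity
  have hfinal : 2 * (δ₂ - δ₁) / (c * δ₂) * Real.exp (c / (1-δ₂) * 2 ^ (1-δ₂)) = K := by
    rw [hKdef, hβdef]; ring_nf
  calc ∑ ℓ ∈ Finset.Icc (kbar+1) k, (1 / (ℓ : ℝ) ^ β) * Real.exp (-ρ * S ℓ)
      = ∑ j ∈ Finset.Ico kbar k, (1 / ((j+1 : ℕ) : ℝ) ^ β) * Real.exp (-ρ * S (j+1)) := hre
    _ ≤ ∑ j ∈ Finset.Ico kbar k, K * (w (j+1) - w j) := Finset.sum_le_sum key
    _ = K * ∑ j ∈ Finset.Ico kbar k, (w (j+1) - w j) := by rw [Finset.mul_sum]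
    _ = K * (w k - w kbar) := by rw [htel]
    _ ≤ K * w k := by nlinarith [hwkb, hK0]
    _ = 2 * (δ₂ - δ₁) / (c * δ₂) * Real.exp (c / (1-δ₂) * 2 ^ (1-δ₂)) * ((k:ℝ)+1) ^ (-γ) := by
        rw [hwk, hfinal]
end

section
/- Let ρ > 0, a > 0, 1/3 < δ₂ < 1, an integer n ≥ 1, L > 0, and c₁, c₂, d₁ ≥ 0 be reals, and set q = 24 n⁴ L⁴ δ₂ a³ / (ρ (3δ₂ − 1)); assume q < 1. Define α_k = a/(k+1)^{δ₂} for k ∈ ℕ. Let (F_k)_{k∈ℕ}, (E_k)_{k∈ℕ} and (g_k)_{k∈ℕ} be sequences of nonnegative reals satisfying: F₀ ≤ c₂; Σ_{k=0}^{∞} g_k ≤ d₁; F_{j+1} ≤ exp(−ρ α_j) F_j + g_j + 2 α_j³ n⁴ L⁴ E_j for every j ∈ ℕ; and E_{k+1} ≤ 2 c₁ + (4/ρ) F_{k+1} for every k ∈ ℕ. Then E_k ≤ C for every k ∈ ℕ, where C = max{ E₀, (2 c₁ + (4/ρ)(c₂ + d₁)) / (1 − q) }. -/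
open Finset

lemma mvt_rpow (p x : ℝ) (hp : 1 < p) (hx : 1 ≤ x) :
    (p - 1) * (x + 1) ^ (-p) ≤ x ^ (1 - p) - (x + 1) ^ (1 - p) := by
  have hx0 : (0:ℝ) < x := lt_of_lt_of_le one_pos hx
  have hab : x < x + 1 := by linarith
  have hderiv : ∀ t ∈ Set.Ioo x (x+1),
      HasDerivAt (fun t : ℝ => t ^ (1 - p)) ((1 - p) * t ^ (-p)) t := by
    intro t ht
    have ht0 : t ≠ 0 := by nlinarith [ht.1]
    have h := Real.hasDerivAt_rpow_const (x := t) (p := 1 - p) (Or.inl ht0)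
    convert h using 2
    ring
  have hcont : ContinuousOn (fun t : ℝ => t ^ (1 - p)) (Set.Icc x (x+1)) := by
    intro t ht
    have ht0 : t ≠ 0 := by nlinarith [ht.1]
    exact (Real.continuousAt_rpow_const t (1-p) (Or.inl ht0)).continuousWithinAt
  obtain ⟨c, hc, hceq⟩ := exists_hasDerivAt_eq_slope (fun t : ℝ => t ^ (1-p))
    (fun t => (1 - p) * t ^ (-p)) hab hcont hderiv
  have hc0 : 0 < c := lt_trans hx0 hc.1
  have hmono : (x + 1) ^ (-p) ≤ c ^ (-p) :=
    Real.rpow_le_rpow_of_nonpos hc0 hc.2.le (by linarith)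
  have hslope : (1 - p) * c ^ (-p) = (x+1) ^ (1-p) - x ^ (1-p) := by
    rw [hceq]; simp
  nlinarith [hmono, hslope]

lemma sum_rpow_bound (p : ℝ) (hp : 1 < p) (N : ℕ) :
    ∑ i ∈ range N, ((i:ℝ)+1) ^ (-p) ≤ p / (p - 1) := by
  have hp0 : 0 < p - 1 := by linarith
  have key : ∀ N : ℕ, 1 ≤ N → ∑ i ∈ range N, ((i:ℝ)+1) ^ (-p)
      ≤ p / (p-1) - ((N:ℝ) ^ (1-p)) / (p-1) := by
    intro N hN
    induction N, hN using Nat.le_induction with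
    | base =>
      simp only [range_one, sum_singleton, Nat.cast_zero, Nat.cast_one, zero_add,
        Real.one_rpow]
      field_simp
      exact le_rfl
    | succ n hn ih =>
      rw [sum_range_succ]
      have hx : (1:ℝ) ≤ (n:ℝ) := by exact_mod_cast hn
      have h := mvt_rpow p (n:ℝ) hp hx
      have hA : ((n:ℝ)+1) ^ (-p) ≤ ((n:ℝ) ^ (1-p) - ((n:ℝ)+1) ^ (1-p)) / (p-1) := by
        rw [le_div_iff₀ hp0]
        nlinarith [h]
      rw [sub_div] at hA
      push_cast
      linarith [ih]
  cases N with
  | zero => simp; positivity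
  | succ n =>
    have h := key (n+1) (by omega)
    have h0 : 0 ≤ (((n+1:ℕ)):ℝ) ^ (1-p) / (p-1) := by positivity
    linarith

/-- Deterministic core of the second-moment lemma (Lemma 6). -/
theorem stmt18 (ρ a δ₂ L c₁ c₂ d₁ : ℝ) (n : ℕ) (hn : 1 ≤ n)
    (hρ : 0 < ρ) (ha : 0 < a) (hδ₂l : 1 / 3 < δ₂) (hδ₂u : δ₂ < 1) (hL : 0 < L)
    (hc₁ : 0 ≤ c₁) (hc₂ : 0 ≤ c₂) (hd₁ : 0 ≤ d₁)
    (hq : 24 * (n : ℝ) ^ 4 * L ^ 4 * δ₂ * a ^ 3 / (ρ * (3 * δ₂ - 1)) < 1)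
    (F E g : ℕ → ℝ)
    (hF : ∀ k, 0 ≤ F k) (hE : ∀ k, 0 ≤ E k) (hg : ∀ k, 0 ≤ g k)
    (hF0 : F 0 ≤ c₂)
    (hgsum : ∀ N : ℕ, ∑ k ∈ Finset.range N, g k ≤ d₁)
    (hFrec : ∀ j : ℕ,
      F (j + 1) ≤ Real.exp (-ρ * (a / ((j : ℝ) + 1) ^ δ₂)) * F j + g j +
        2 * (a / ((j : ℝ) + 1) ^ δ₂) ^ 3 * (n : ℝ) ^ 4 * L ^ 4 * E j)
    (hErec : ∀ k : ℕ, E (k + 1) ≤ 2 * c₁ + (4 / ρ) * F (k + 1)) :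
    ∀ k : ℕ,
      E k ≤ max (E 0)
        ((2 * c₁ + (4 / ρ) * (c₂ + d₁)) /
          (1 - 24 * (n : ℝ) ^ 4 * L ^ 4 * δ₂ * a ^ 3 / (ρ * (3 * δ₂ - 1)))) := by
  obtain ⟨q, hqdef⟩ : ∃ x : ℝ, x = 24 * (n : ℝ) ^ 4 * L ^ 4 * δ₂ * a ^ 3 / (ρ * (3 * δ₂ - 1)) :=
    ⟨_, rfl⟩
  rw [← hqdef] at hq ⊢
  obtain ⟨C, hCdef⟩ : ∃ x : ℝ, x = max (E 0) ((2 * c₁ + (4 / ρ) * (c₂ + d₁)) / (1 - q)) :=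
    ⟨_, rfl⟩
  rw [← hCdef]
  have hδ0 : 0 < δ₂ := by linarith
  have hp : 1 < 3 * δ₂ := by linarith
  have h3δ : 0 < 3 * δ₂ - 1 := by linarith
  have hq0 : 0 ≤ q := by
    rw [hqdef]
    apply div_nonneg
    · have h1 : (0:ℝ) ≤ 24 * (n:ℝ)^4 * L^4 := by positivity
      exact mul_nonneg (mul_nonneg h1 hδ0.le) (by positivity)
    · exact (mul_pos hρ h3δ).le
  have hC0 : 0 ≤ C := hCdef ▸ le_trans (hE 0) (le_max_left _ _)
  have h1q : 0 < 1 - q := by linarith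
  have hnum : 2 * c₁ + (4 / ρ) * (c₂ + d₁) ≤ (1 - q) * C := by
    have h1 : (2 * c₁ + (4 / ρ) * (c₂ + d₁)) / (1 - q) ≤ C := hCdef ▸ le_max_right _ _
    rw [div_le_iff₀ h1q] at h1
    linarith [h1]
  have hα3 : ∀ j : ℕ, (a / ((j:ℝ)+1) ^ δ₂) ^ 3 = a^3 * ((j:ℝ)+1) ^ (-(3*δ₂)) := by
    intro j
    have hj : (0:ℝ) < (j:ℝ)+1 := by positivity
    rw [div_pow, ← Real.rpow_natCast (((j:ℝ)+1) ^ δ₂) 3, ← Real.rpow_mul hj.le,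
        Real.rpow_neg hj.le]
    have h3 : δ₂ * ((3:ℕ):ℝ) = 3 * δ₂ := by push_cast; ring
    rw [h3, div_eq_mul_inv]
  have hS : ∀ N : ℕ, ∑ i ∈ range N, a^3 * ((i:ℝ)+1) ^ (-(3*δ₂))
      ≤ a^3 * ((3*δ₂) / (3*δ₂ - 1)) := by
    intro N
    rw [← mul_sum]
    exact mul_le_mul_of_nonneg_left (sum_rpow_bound (3*δ₂) hp N) (by positivity)
  have main : ∀ k : ℕ, E k ≤ C ∧
      F k ≤ c₂ + (∑ i ∈ range k, g i) +
        2 * (n:ℝ)^4 * L^4 * C * ∑ i ∈ range k, a^3 * ((i:ℝ)+1) ^ (-(3*δ₂)) := by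
    intro k
    induction k with
    | zero => exact ⟨hCdef ▸ le_max_left _ _, by simpa using hF0⟩
    | succ k ih =>
      obtain ⟨ihE, ihF⟩ := ih
      have hαpos : (0:ℝ) < a / ((k:ℝ)+1) ^ δ₂ := by positivity
      have hFk1 : F (k+1) ≤ c₂ + (∑ i ∈ range (k+1), g i) +
          2 * (n:ℝ)^4 * L^4 * C * ∑ i ∈ range (k+1), a^3 * ((i:ℝ)+1) ^ (-(3*δ₂)) := by
        have h1 := hFrec k
        have hexp : Real.exp (-ρ * (a / ((k:ℝ)+1) ^ δ₂)) ≤ 1 := by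
          calc Real.exp (-ρ * (a / ((k:ℝ)+1) ^ δ₂)) ≤ Real.exp 0 :=
                Real.exp_le_exp.mpr (by nlinarith [hαpos])
            _ = 1 := Real.exp_zero
        have h2 : Real.exp (-ρ * (a / ((k:ℝ)+1) ^ δ₂)) * F k ≤ F k := by
          nlinarith [hF k, hexp, Real.exp_pos (-ρ * (a / ((k:ℝ)+1) ^ δ₂))]
        have h3 : 2 * (a / ((k:ℝ)+1) ^ δ₂)^3 * (n:ℝ)^4 * L^4 * E k
            ≤ 2 * (n:ℝ)^4 * L^4 * C * (a^3 * ((k:ℝ)+1) ^ (-(3*δ₂))) := by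
          rw [← hα3 k]
          have hpos : (0:ℝ) ≤ 2 * (a / ((k:ℝ)+1) ^ δ₂)^3 * (n:ℝ)^4 * L^4 := by positivity
          nlinarith [mul_le_mul_of_nonneg_left ihE hpos]
        rw [sum_range_succ, sum_range_succ, mul_add]
        linarith [h1, h2, h3, ihF]
      refine ⟨?_, hFk1⟩
      have h4 := hErec k
      have hsum_g := hgsum (k+1)
      have hsum_α := hS (k+1)
      have hF' : F (k+1) ≤ c₂ + d₁ + 2*(n:ℝ)^4*L^4*C*(a^3*((3*δ₂)/(3*δ₂-1))) := by
        have hmul : 2*(n:ℝ)^4*L^4*C * (∑ i ∈ range (k+1), a^3 * ((i:ℝ)+1) ^ (-(3*δ₂)))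
            ≤ 2*(n:ℝ)^4*L^4*C*(a^3*((3*δ₂)/(3*δ₂-1))) :=
          mul_le_mul_of_nonneg_left hsum_α (by positivity)
        linarith [hFk1]
      have hqC : (4/ρ) * (2*(n:ℝ)^4*L^4*C*(a^3*((3*δ₂)/(3*δ₂-1)))) = q * C := by
        have hρ' : ρ ≠ 0 := ne_of_gt hρ
        have h3' : 3 * δ₂ - 1 ≠ 0 := ne_of_gt h3δ
        rw [hqdef]
        field_simp
        ring
      have h5 : (4/ρ) * F (k+1) ≤ (4/ρ)*(c₂+d₁) + q*C := by
        have h40 : (0:ℝ) ≤ 4/ρ := by positivity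
        have hmono := mul_le_mul_of_nonneg_left hF' h40
        have hexpand : (4/ρ) * (c₂ + d₁ + 2*(n:ℝ)^4*L^4*C*(a^3*((3*δ₂)/(3*δ₂-1))))
            = (4/ρ)*(c₂+d₁) + q*C := by rw [← hqC]; ring
        linarith [hmono, hexpand.le, hexpand.ge]
      calc E (k+1) ≤ 2*c₁ + (4/ρ)*F (k+1) := h4
        _ ≤ 2*c₁ + (4/ρ)*(c₂+d₁) + q*C := by linarith
        _ ≤ (1-q)*C + q*C := by linarith [hnum]
        _ = C := by ring
  intro k; exact (main k).1
end
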